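/- arXiv:1308.2604 — 3 statements merged into one kernel-verified Lean document; each statement's English description precedes it below -/
import Mathlib

section
/- Let k be a field, A a Z-graded commutative k-algebra, and R any commutative k-algebra. Grade the polynomial ring R[t] by placing R in degree 0 and t in degree 1. Then composition with the evaluation homomorphism R[t] -> R, t |-> 1, is a bijection from the set of graded k-algebra homomorphisms A -> R[t] onto the set of k-algebra homomorphisms A -> R that vanish on every homogeneous element of A of strictly negative degree (equivalently, onto the set of k-algebra homomorphisms A^+ -> R). In particular, the inverse bijection sends a homomorphism psi : A -> R killing all negative-degree homogeneous elements to the graded homomorphism a |-> sum_{n >= 0} psi(a_n) t^n, where a_n is the degree-n component of a. -/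
open scoped Classical

/-- `φ : A →ₐ[k] R[t]` is a graded homomorphism, where `R[t]` is graded with `R` in
degree `0` and `t` in degree `1`: the degree-`n` component of `A` is sent into `R·tⁿ`
for `n ≥ 0`, and to `0` for `n < 0` (the degree-`n` component of `R[t]` being zero
for negative `n`). -/
def IsGradedToPoly {k A R : Type*} [CommSemiring k] [CommRing A] [Algebra k A]
    [CommRing R] [Algebra k R] (𝒜 : ℤ → Submodule k A) (φ : A →ₐ[k] Polynomial R) : Prop :=
  ∀ n : ℤ, ∀ a ∈ 𝒜 n,
    if 0 ≤ n then ∃ r : R, φ a = Polynomial.C r * Polynomial.X ^ n.toNat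
    else φ a = 0

/-- Composition with the evaluation `R[t] → R`, `t ↦ 1`, as a `k`-algebra homomorphism. -/
noncomputable def evalOne (k R : Type*) [CommSemiring k] [CommRing R] [Algebra k R] :
    Polynomial R →ₐ[k] R :=
  (Polynomial.aeval (1 : R)).restrictScalars k

/-!
A graded `φ : A → R[t]` sends `a ∈ 𝒜 n` to some `c tⁿ`, and evaluation at `t = 1`
returns `c`; so `φ` is determined on homogeneous elements by `ψ = ev₁ ∘ φ`, and `ψ` kills
negative degrees.
Conversely, if `ψ` kills negative degrees, then `a ↦ ψ(a) tⁿ` on `𝒜 n` is multiplicative on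
homogeneous pieces, hence extends along `A ≃ ⨁ n, 𝒜 n` to a graded lift of `ψ`.
-/

open Polynomial

section

variable {k A R : Type*} [CommSemiring k] [CommRing A] [Algebra k A] [CommRing R] [Algebra k R]
  {𝒜 : ℤ → Submodule k A}

@[simp]
lemma evalOne_C_mul_X_pow (r : R) (m : ℕ) : evalOne k R (C r * X ^ m) = r := by
  simp [evalOne]

lemma algHom_ext_of_homogeneous {ι : Type*} [DecidableEq ι] (𝒜 : ι → Submodule k A)
    [DirectSum.Decomposition 𝒜] {S : Type*} [Semiring S] [Algebra k S] {f g : A →ₐ[k] S}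
    (h : ∀ n, ∀ a ∈ 𝒜 n, f a = g a) : f = g :=
  AlgHom.toLinearMap_injective <|
    DirectSum.decompose_lhom_ext 𝒜 fun n => LinearMap.ext fun a => h n a a.2

namespace IsGradedToPoly

variable {φ : A →ₐ[k] R[X]} {n : ℤ} {a : A}

lemma apply_eq_zero_of_neg (hφ : IsGradedToPoly 𝒜 φ) (hn : n < 0) (ha : a ∈ 𝒜 n) :
    φ a = 0 := by
  simpa [hn.not_ge] using hφ n a ha

lemma apply_eq_of_mem (hφ : IsGradedToPoly 𝒜 φ) (ha : a ∈ 𝒜 n) :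
    φ a = C (evalOne k R (φ a)) * X ^ n.toNat := by
  by_cases hn : 0 ≤ n
  · obtain ⟨r, hr⟩ : ∃ r : R, φ a = C r * X ^ n.toNat := by simpa [hn] using hφ n a ha
    rw [hr, evalOne_C_mul_X_pow]
  · simp [hφ.apply_eq_zero_of_neg (not_le.mp hn) ha]

lemma apply_eq_sum [DirectSum.Decomposition 𝒜] (hφ : IsGradedToPoly 𝒜 φ) (a : A) :
    φ a = ∑ n ∈ (DirectSum.decompose 𝒜 a).support,
      C (evalOne k R (φ (DirectSum.decompose 𝒜 a n))) * X ^ n.toNat := by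
  conv_lhs => rw [← DirectSum.sum_support_decompose 𝒜 a, map_sum]
  exact Finset.sum_congr rfl fun n _ => hφ.apply_eq_of_mem (SetLike.coe_mem _)

end IsGradedToPoly

section gradedLift

def VanishesInNegativeDegrees (𝒜 : ℤ → Submodule k A) (ψ : A →ₐ[k] R) : Prop :=
  ∀ n < (0 : ℤ), ∀ a ∈ 𝒜 n, ψ a = 0

variable (ψ : A →ₐ[k] R)

/-- For `n < 0` the factor `X ^ n.toNat = 1` is junk, harmless once `ψ` kills `𝒜 n`. -/
noncomputable def homogeneousLift (n : ℤ) : 𝒜 n →ₗ[k] R[X] where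
  toFun a := C (ψ a) * X ^ n.toNat
  map_add' x y := by simp [add_mul]
  map_smul' c x := by
    simp only [SetLike.val_smul, map_smul, RingHom.id_apply]
    rw [Algebra.smul_def, Algebra.smul_def, map_mul, Polynomial.algebraMap_apply, mul_assoc]

variable {ψ}

lemma homogeneousLift_mul [SetLike.GradedMonoid 𝒜] (hψ : VanishesInNegativeDegrees 𝒜 ψ)
    {i j : ℤ} (a : 𝒜 i) (b : 𝒜 j) :
    homogeneousLift ψ (i + j) (GradedMonoid.GMul.mul (A := fun n => 𝒜 n) a b) =
      homogeneousLift ψ i a * homogeneousLift ψ j b := by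
  simp only [homogeneousLift, LinearMap.coe_mk, AddHom.coe_mk, SetLike.coe_gMul]
  by_cases hi : 0 ≤ i
  · by_cases hj : 0 ≤ j
    · rw [Int.toNat_add hi hj, pow_add, map_mul, map_mul]; ring
    · simp [hψ j (not_le.mp hj) _ b.2]
  · simp [hψ i (not_le.mp hi) _ a.2]

noncomputable def gradedLift [GradedAlgebra 𝒜] (hψ : VanishesInNegativeDegrees 𝒜 ψ) :
    A →ₐ[k] R[X] :=
  (DirectSum.toAlgebra k (fun n => 𝒜 n) (homogeneousLift ψ)
    (by simp [homogeneousLift, SetLike.coe_gOne])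
    (homogeneousLift_mul hψ)).comp
    (DirectSum.decomposeAlgEquiv 𝒜).toAlgHom

variable [GradedAlgebra 𝒜]

lemma gradedLift_apply_of_mem (hψ : VanishesInNegativeDegrees 𝒜 ψ) {n : ℤ} {a : A}
    (ha : a ∈ 𝒜 n) :
    gradedLift hψ a = C (ψ a) * X ^ n.toNat := by
  simp only [gradedLift, AlgHom.comp_apply, AlgEquiv.coe_toAlgHom,
    DirectSum.decomposeAlgEquiv_apply, DirectSum.decompose_of_mem 𝒜 ha,
    DirectSum.toAlgebra_apply]
  exact DirectSum.toSemiring_of _ _ _ _ _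

lemma isGradedToPoly_gradedLift (hψ : VanishesInNegativeDegrees 𝒜 ψ) :
    IsGradedToPoly 𝒜 (gradedLift hψ) := by
  intro n a ha
  rw [gradedLift_apply_of_mem hψ ha]
  split_ifs with hn
  · exact ⟨ψ a, rfl⟩
  · simp [hψ n (not_le.mp hn) a ha]

lemma evalOne_comp_gradedLift (hψ : VanishesInNegativeDegrees 𝒜 ψ) :
    (evalOne k R).comp (gradedLift hψ) = ψ :=
  algHom_ext_of_homogeneous 𝒜 fun n a ha => by
    rw [AlgHom.comp_apply, gradedLift_apply_of_mem hψ ha, evalOne_C_mul_X_pow]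

lemma eq_gradedLift (hψ : VanishesInNegativeDegrees 𝒜 ψ) {φ : A →ₐ[k] R[X]}
    (hφ : IsGradedToPoly 𝒜 φ) (hcomp : (evalOne k R).comp φ = ψ) : φ = gradedLift hψ :=
  algHom_ext_of_homogeneous 𝒜 fun n a ha => by
    rw [hφ.apply_eq_of_mem ha, gradedLift_apply_of_mem hψ ha, ← AlgHom.comp_apply, hcomp]

end gradedLift

end

/-- Let `k` be a field, `A` a `ℤ`-graded commutative `k`-algebra and `R` a
commutative `k`-algebra.  Composition with the evaluation `R[t] → R`, `t ↦ 1`, is a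
bijection from the set of graded `k`-algebra homomorphisms `A → R[t]` onto the set of
`k`-algebra homomorphisms `A → R` vanishing on all homogeneous elements of strictly
negative degree; moreover the inverse sends `ψ` to `a ↦ ∑_{n} ψ(aₙ) tⁿ` (the terms with
`n < 0` vanish). -/
theorem stmt_0 {k A R : Type*} [Field k] [CommRing A] [Algebra k A]
    (𝒜 : ℤ → Submodule k A) [GradedAlgebra 𝒜] [CommRing R] [Algebra k R] :
    (∀ ψ : A →ₐ[k] R,
      (∀ n < (0 : ℤ), ∀ a ∈ 𝒜 n, ψ a = 0) ↔
        ∃! φ : A →ₐ[k] Polynomial R,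
          IsGradedToPoly 𝒜 φ ∧ (evalOne k R).comp φ = ψ) ∧
    (∀ φ : A →ₐ[k] Polynomial R, IsGradedToPoly 𝒜 φ → ∀ a : A,
      φ a = ∑ n ∈ (DirectSum.decompose 𝒜 a).support,
        Polynomial.C (evalOne k R (φ (DirectSum.decompose 𝒜 a n))) *
          Polynomial.X ^ n.toNat) := by
  refine ⟨fun ψ => ⟨fun hψ => ?_, ?_⟩, fun φ hφ => hφ.apply_eq_sum⟩
  · exact ⟨gradedLift hψ, ⟨isGradedToPoly_gradedLift hψ, evalOne_comp_gradedLift hψ⟩,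
      fun φ ⟨hφ, hcomp⟩ => eq_gradedLift hψ hφ hcomp⟩
  · rintro ⟨φ, ⟨hφ, rfl⟩, -⟩ n hn a ha
    simp [hφ.apply_eq_zero_of_neg hn ha]
end

section
/- Let k be a field, R a commutative k[t]-algebra, and n an integer. Grade the polynomial ring k[x] by declaring x homogeneous of degree n. Let ev_1 : A_R -> R be the R-algebra homomorphism with tau_1 |-> 1, tau_2 |-> t, and ev_2 : A_R -> R the R-algebra homomorphism with tau_1 |-> t, tau_2 |-> 1. Then the map phi |-> (ev_1(phi(x)), ev_2(phi(x))) is a bijection from the set of graded k-algebra homomorphisms k[x] -> A_R onto the set {(x_1, x_2) in R × R : x_2 = t^n x_1} if n >= 0, and onto the set {(x_1, x_2) in R × R : x_1 = t^{-n} x_2} if n <= 0. -/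
/-- The element `τ₁τ₂ - t` of `R[τ₁, τ₂]`. -/
noncomputable def hypGen (R : Type*) [CommRing R] (t : R) : MvPolynomial (Fin 2) R :=
  MvPolynomial.X 0 * MvPolynomial.X 1 - MvPolynomial.C t

/-- The coordinate ring `A_R := R[τ₁, τ₂]/(τ₁τ₂ - t)` of the family of hyperbolas. -/
abbrev HypCoordRing (R : Type*) [CommRing R] (t : R) : Type _ :=
  MvPolynomial (Fin 2) R ⧸ Ideal.span {hypGen R t}

/-- The images of the coordinates `τ₁, τ₂` in `A_R`. -/
noncomputable def hypTau (R : Type*) [CommRing R] (t : R) (i : Fin 2) : HypCoordRing R t :=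
  Ideal.Quotient.mk _ (MvPolynomial.X i)

/-- The element `e_n ∈ A_R`: `e_n = τ₁ⁿ` for `n ≥ 0`, `e_n = τ₂^(-n)` for `n ≤ 0`. -/
noncomputable def hypBasisElt (R : Type*) [CommRing R] (t : R) (n : ℤ) : HypCoordRing R t :=
  if 0 ≤ n then hypTau R t 0 ^ n.toNat else hypTau R t 1 ^ (-n).toNat

/-- Evaluation `A_R → R` at a point `(v 0, v 1)` of the hyperbola `τ₁τ₂ = t`. -/
noncomputable def hypEval (R : Type*) [CommRing R] (t : R) (v : Fin 2 → R)
    (hv : v 0 * v 1 = t) : HypCoordRing R t →ₐ[R] R :=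
  Ideal.Quotient.liftₐ (Ideal.span {hypGen R t}) (MvPolynomial.aeval v) (by
    intro a ha
    obtain ⟨c, rfl⟩ := Ideal.mem_span_singleton.mp ha
    rw [map_mul]
    have hg : (MvPolynomial.aeval v) (hypGen R t) = 0 := by
      simp [hypGen, hv]
    rw [hg, zero_mul])

/-- The degree-`d` component of `k[x]`, where `x` is declared homogeneous of degree
`n : ℤ`: the span of the monomials `x^m` with `m·n = d`. -/
noncomputable def wtGrading (k : Type*) [CommSemiring k] (n d : ℤ) : Submodule k (Polynomial k) :=
  Submodule.span k {p : Polynomial k | ∃ m : ℕ, (m : ℤ) * n = d ∧ p = Polynomial.X ^ m}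

/-! A `k`-algebra map `φ : k[x] → A_R` is determined by `y = φ(x)`, and it is graded exactly when
`y` is homogeneous of degree `n`, i.e. `y = r • e_n`. Now `(ev₁ e_n, ev₂ e_n)` is `(1, tⁿ)` for
`n ≥ 0` and `(t⁻ⁿ, 1)` for `n < 0`, so the pairs `(ev₁ y, ev₂ y)` are exactly the stated ones, and
`r`, hence `φ`, is recovered from the evaluation equal to `1`. -/

section

variable {R : Type*} [CommRing R] {t : R}

@[simp] lemma hypBasisElt_natCast (c : ℕ) : hypBasisElt R t c = hypTau R t 0 ^ c := by
  simp [hypBasisElt]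

@[simp] lemma hypBasisElt_neg_natCast (c : ℕ) : hypBasisElt R t (-c) = hypTau R t 1 ^ c := by
  rcases c.eq_zero_or_pos with rfl | hc
  · simp [hypBasisElt]
  · simp [hypBasisElt, hc.ne']

lemma hypBasisElt_pow (n : ℤ) (m : ℕ) : hypBasisElt R t n ^ m = hypBasisElt R t (m * n) := by
  obtain ⟨c, rfl | rfl⟩ := Int.eq_nat_or_neg n
  · rw [← Nat.cast_mul, hypBasisElt_natCast, hypBasisElt_natCast, ← pow_mul, mul_comm]
  · rw [mul_neg, ← Nat.cast_mul, hypBasisElt_neg_natCast, hypBasisElt_neg_natCast, ← pow_mul,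
      mul_comm]

lemma hypEval_hypBasisElt (v : Fin 2 → R) (hv : v 0 * v 1 = t) (d : ℤ) :
    hypEval R t v hv (hypBasisElt R t d) =
      if 0 ≤ d then v 0 ^ d.toNat else v 1 ^ (-d).toNat := by
  unfold hypBasisElt
  split <;> simp [hypEval, hypTau]

lemma hypEval_one_t_hypBasisElt (n : ℤ) :
    hypEval R t ![1, t] (by simp) (hypBasisElt R t n) = if 0 ≤ n then 1 else t ^ (-n).toNat := by
  rw [hypEval_hypBasisElt]; split <;> simp

lemma hypEval_t_one_hypBasisElt (n : ℤ) :
    hypEval R t ![t, 1] (by simp) (hypBasisElt R t n) = if 0 ≤ n then t ^ n.toNat else 1 := by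
  rw [hypEval_hypBasisElt]; split <;> simp

lemma eq_of_hypEval_smul_hypBasisElt {n : ℤ} {r s : R}
    (h₁ : hypEval R t ![1, t] (by simp) (r • hypBasisElt R t n) =
      hypEval R t ![1, t] (by simp) (s • hypBasisElt R t n))
    (h₂ : hypEval R t ![t, 1] (by simp) (r • hypBasisElt R t n) =
      hypEval R t ![t, 1] (by simp) (s • hypBasisElt R t n)) : r = s := by
  simp only [map_smul, smul_eq_mul, hypEval_one_t_hypBasisElt, hypEval_t_one_hypBasisElt] at h₁ h₂
  split_ifs at h₁ h₂ <;> first | simpa using h₁ | simpa using h₂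

end

section

variable {k R : Type*} [CommSemiring k] [CommRing R] [Algebra k R] {t : R} {n : ℤ}

def IsWtGraded (n : ℤ) (φ : Polynomial k →ₐ[k] HypCoordRing R t) : Prop :=
  ∀ d : ℤ, ∀ p ∈ wtGrading k n d, φ p ∈ Submodule.span R {hypBasisElt R t d}

lemma X_mem_wtGrading : (Polynomial.X : Polynomial k) ∈ wtGrading k n n :=
  Submodule.subset_span ⟨1, by simp, (pow_one _).symm⟩

lemma pow_mem_span_hypBasisElt {y : HypCoordRing R t}
    (hy : y ∈ Submodule.span R {hypBasisElt R t n}) (m : ℕ) :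
    y ^ m ∈ Submodule.span R {hypBasisElt R t (m * n)} := by
  obtain ⟨r, rfl⟩ := Submodule.mem_span_singleton.mp hy
  rw [smul_pow, hypBasisElt_pow]
  exact Submodule.smul_mem _ _ (Submodule.mem_span_singleton_self _)

lemma isWtGraded_iff (φ : Polynomial k →ₐ[k] HypCoordRing R t) :
    IsWtGraded n φ ↔ φ Polynomial.X ∈ Submodule.span R {hypBasisElt R t n} := by
  refine ⟨fun h ↦ h n _ X_mem_wtGrading, fun hX d ↦ ?_⟩
  have : wtGrading k n d ≤ ((Submodule.span R {hypBasisElt R t d}).restrictScalars k).comap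
      φ.toLinearMap := by
    rw [wtGrading, Submodule.span_le]
    rintro _ ⟨m, rfl, rfl⟩
    simpa using pow_mem_span_hypBasisElt hX m
  exact fun p hp ↦ this hp

lemma existsUnique_isWtGraded_iff (x₁ x₂ : R) :
    (∃! φ : Polynomial k →ₐ[k] HypCoordRing R t, IsWtGraded n φ ∧
        hypEval R t ![1, t] (by simp) (φ Polynomial.X) = x₁ ∧
        hypEval R t ![t, 1] (by simp) (φ Polynomial.X) = x₂) ↔
      ∃ r : R, hypEval R t ![1, t] (by simp) (r • hypBasisElt R t n) = x₁ ∧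
        hypEval R t ![t, 1] (by simp) (r • hypBasisElt R t n) = x₂ := by
  constructor
  · rintro ⟨φ, ⟨hφ, h₁, h₂⟩, -⟩
    obtain ⟨r, hr⟩ := Submodule.mem_span_singleton.mp ((isWtGraded_iff φ).mp hφ)
    exact ⟨r, hr ▸ h₁, hr ▸ h₂⟩
  · rintro ⟨r, h₁, h₂⟩
    refine ⟨Polynomial.aeval (r • hypBasisElt R t n),
      ⟨?_, by simpa using h₁, by simpa using h₂⟩, ?_⟩
    · rw [isWtGraded_iff, Polynomial.aeval_X]
      exact Submodule.smul_mem _ _ (Submodule.mem_span_singleton_self _)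
    · rintro ψ ⟨hψ, hψ₁, hψ₂⟩
      obtain ⟨s, hs⟩ := Submodule.mem_span_singleton.mp ((isWtGraded_iff ψ).mp hψ)
      rw [← hs] at hψ₁ hψ₂
      refine Polynomial.algHom_ext ?_
      rw [Polynomial.aeval_X, ← hs,
        eq_of_hypEval_smul_hypBasisElt (hψ₁.trans h₁.symm) (hψ₂.trans h₂.symm)]

end

/-- Let `k` be a field, `R` a commutative `k[t]`-algebra, `n ∈ ℤ`, and
grade `k[x]` by `deg x = n`.  The map `φ ↦ (ev₁(φ(x)), ev₂(φ(x)))`, where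
`ev₁ : A_R → R` sends `τ₁ ↦ 1, τ₂ ↦ t` and `ev₂ : A_R → R` sends `τ₁ ↦ t, τ₂ ↦ 1`,
is a bijection from the graded `k`-algebra homomorphisms `k[x] → A_R` onto
`{(x₁, x₂) | x₂ = tⁿ x₁}` if `n ≥ 0`, and onto `{(x₁, x₂) | x₁ = t⁻ⁿ x₂}` if `n ≤ 0`. -/
theorem stmt_5 (k R : Type*) [Field k] [CommRing R]
    [Algebra k R] (n : ℤ)
    (t : R) :
    ∀ x₁ x₂ : R,
      (if 0 ≤ n then x₂ = t ^ n.toNat * x₁ else x₁ = t ^ (-n).toNat * x₂) ↔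
      ∃! φ : Polynomial k →ₐ[k] HypCoordRing R t,
        (∀ d : ℤ, ∀ p ∈ wtGrading k n d,
          φ p ∈ Submodule.span R {hypBasisElt R t d}) ∧
        hypEval R t ![1, t] (by simp) (φ Polynomial.X) = x₁ ∧
        hypEval R t ![t, 1] (by simp) (φ Polynomial.X) = x₂ := by
  intro x₁ x₂
  refine Iff.trans ?_ (existsUnique_isWtGraded_iff x₁ x₂).symm
  simp only [map_smul, smul_eq_mul, hypEval_one_t_hypBasisElt, hypEval_t_one_hypBasisElt]
  split_ifs
  · exact ⟨fun h ↦ ⟨x₁, mul_one _, by rw [h, mul_comm]⟩,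
      fun ⟨r, h₁, h₂⟩ ↦ by rw [← h₁, ← h₂, mul_one, mul_comm]⟩
  · exact ⟨fun h ↦ ⟨x₂, by rw [h, mul_comm], mul_one _⟩,
      fun ⟨r, h₁, h₂⟩ ↦ by rw [← h₁, ← h₂, mul_one, mul_comm]⟩
end

section
/- Let A, B be schemes and f : A -> B a morphism that is surjective on underlying topological spaces and such that the canonical map O_B -> f_* O_A is an isomorphism. Then f is an epimorphism in the category of schemes: for any scheme Z and morphisms g_1, g_2 : B -> Z with g_1 ∘ f = g_2 ∘ f, one has g_1 = g_2. -/
/-!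
A surjective continuous map is an epimorphism of topological spaces, so `f ≫ g₁ = f ≫ g₂` forces
`g₁` and `g₂` to agree on underlying spaces. On sections, `g₁.app U` and `g₂.app U` then have the
same source and target, and they agree after composing with the monomorphism `f.app (g₂ ⁻¹ᵁ U)`.
-/

open AlgebraicGeometry CategoryTheory

namespace AlgebraicGeometry.Scheme.Hom

variable {A B Z : Scheme} {f : A ⟶ B} {g₁ g₂ : B ⟶ Z}

lemma base_eq_of_comp_eq (hf : Function.Surjective f.base) (h : f ≫ g₁ = f ≫ g₂) :
    g₁.base = g₂.base := by
  have := (TopCat.epi_iff_surjective f.base).mpr hf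
  rw [← cancel_epi f.base, ← comp_base, h, comp_base]

lemma eq_of_base_eq_of_comp_eq (hf : ∀ U, Mono (f.app U)) (hb : g₁.base = g₂.base)
    (h : f ≫ g₁ = f ≫ g₂) : g₁ = g₂ := by
  refine Scheme.Hom.ext hb fun U ↦ ?_
  rw [← cancel_mono (f.app (g₂ ⁻¹ᵁ U)), g₁.app_eq_appLE, appLE_map, g₂.app_eq_appLE,
    app_eq_appLE, appLE_comp_appLE, appLE_comp_appLE]
  simp only [h]

lemma epi_of_surjective_of_mono_app (hsurj : Function.Surjective f.base)
    (hmono : ∀ U, Mono (f.app U)) : Epi f :=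
  ⟨fun _ _ h ↦ eq_of_base_eq_of_comp_eq hmono (base_eq_of_comp_eq hsurj h) h⟩

end AlgebraicGeometry.Scheme.Hom

/-- Let `f : A ⟶ B` be a morphism of schemes which is surjective on
underlying topological spaces and such that the canonical map `O_B → f_* O_A` is an
isomorphism (equivalently, each component `f.app U` is an isomorphism).  Then `f` is an
epimorphism in the category of schemes: any two morphisms `g₁ g₂ : B ⟶ Z` with
`f ≫ g₁ = f ≫ g₂` are equal. -/
theorem stmt_11 {A B : Scheme} (f : A ⟶ B) (hsurj : Function.Surjective f.base)
    (hO : ∀ U : B.Opens, IsIso (f.app U))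
    (Z : Scheme) (g₁ g₂ : B ⟶ Z) (h : f ≫ g₁ = f ≫ g₂) : g₁ = g₂ := by
  have : Epi f := Scheme.Hom.epi_of_surjective_of_mono_app hsurj fun U ↦
    have := hO U
    inferInstance
  exact (cancel_epi f).mp h
end
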